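/- Fix positive integers k, n₁,…,n_k, let P_j ⊆ ℝ^{n_j} be a polytope (the convex hull of a nonempty finite set) for each j ∈ {1,…,k}, and let M : ℝ^{n₁}×⋯×ℝ^{n_k} → ℝ be multilinear. Then conv{(x, M(x)) : x ∈ ∏_{j=1}^k P_j} = conv{(v, M(v)) : v_j is an extreme point of P_j for each j ∈ {1,…,k}}. -/

import Mathlib

/-!
Each graph point `(x, M x)` with `x` in the product of polytopes is moved, one block at a time,
into the convex hull of graph points whose blocks are extreme points: with the other blocks
fixed, `y ↦ (update x j y, M (update x j y))` is affine, so it maps the polytope `P j`, the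
convex hull of its extreme points (Krein–Milman), into the convex hull of the images of those
extreme points.
-/

/-- `M` is multilinear in the block variables: fixing all blocks except the `j`-th yields an
affine map `ℝ^{n_j} → ℝ`. -/
def IsBlockMultilinear {k : ℕ} {n : Fin k → ℕ}
    (M : ((j : Fin k) → (Fin (n j) → ℝ)) → ℝ) : Prop :=
  ∀ (j : Fin k) (x : (j : Fin k) → Fin (n j) → ℝ),
    ∃ A : (Fin (n j) → ℝ) →ᵃ[ℝ] ℝ, ∀ y : Fin (n j) → ℝ, M (Function.update x j y) = A y

open Function Set

section SeparatelyAffine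

variable (𝕜 : Type*) {ι F G : Type*} {E : ι → Type*} [Ring 𝕜] [∀ i, AddCommGroup (E i)]
  [∀ i, Module 𝕜 (E i)] [AddCommGroup F] [Module 𝕜 F] [AddCommGroup G] [Module 𝕜 G] [DecidableEq ι]

def IsSeparatelyAffine (f : (Π i, E i) → F) : Prop :=
  ∀ i (x : Π i, E i), ∃ A : E i →ᵃ[𝕜] F, ∀ y, f (update x i y) = A y

variable {𝕜}

theorem isSeparatelyAffine_id : IsSeparatelyAffine 𝕜 (id : (Π i, E i) → Π i, E i) := fun i x =>
  ⟨(LinearMap.single 𝕜 E i).toAffineMap + AffineMap.const 𝕜 (E i) (x - Pi.single i (x i)),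
    fun y => by simp [Pi.update_eq_sub_add_single, add_comm]⟩

theorem IsSeparatelyAffine.prodMk {f : (Π i, E i) → F} {g : (Π i, E i) → G}
    (hf : IsSeparatelyAffine 𝕜 f) (hg : IsSeparatelyAffine 𝕜 g) :
    IsSeparatelyAffine 𝕜 (fun x => (f x, g x)) := fun i x => by
  obtain ⟨A, hA⟩ := hf i x
  obtain ⟨B, hB⟩ := hg i x
  exact ⟨A.prod B, fun y => by simp [hA, hB]⟩

variable [PartialOrder 𝕜]

theorem IsSeparatelyAffine.mem_convexHull_image_pi [Fintype ι] {f : (Π i, E i) → F}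
    (hf : IsSeparatelyAffine 𝕜 f) {S : Π i, Set (E i)} {x : Π i, E i}
    (hx : ∀ i, x i ∈ convexHull 𝕜 (S i)) : f x ∈ convexHull 𝕜 (f '' univ.pi S) := by
  suffices h : ∀ s : Finset ι, ∀ x : Π i, E i, (∀ i, x i ∈ convexHull 𝕜 (S i)) →
      (∀ i ∉ s, x i ∈ S i) → f x ∈ convexHull 𝕜 (f '' univ.pi S) from
    h Finset.univ x hx (by simp)
  intro s
  induction s using Finset.induction_on with
  | empty => exact fun x _ hxS => subset_convexHull 𝕜 _ ⟨x, fun i _ => hxS i (by simp), rfl⟩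
  | insert a s _ ih =>
    intro x hx hxS
    obtain ⟨A, hA⟩ := hf a x
    have hvertices : A '' S a ⊆ convexHull 𝕜 (f '' univ.pi S) := by
      rintro _ ⟨v, hv, rfl⟩
      rw [← hA]
      refine ih _ (fun i => ?_) (fun i hi => ?_)
      · rcases eq_or_ne i a with rfl | hia
        · simpa using subset_convexHull 𝕜 _ hv
        · simpa [hia] using hx i
      · rcases eq_or_ne i a with rfl | hia
        · simpa using hv
        · simpa [hia] using hxS i (by simp [hia, hi])
    have hxa : A (x a) ∈ A '' convexHull 𝕜 (S a) := mem_image_of_mem A (hx a)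
    rw [A.image_convexHull] at hxa
    simpa [← hA] using convexHull_min hvertices (convex_convexHull 𝕜 _) hxa

theorem IsSeparatelyAffine.convexHull_image_pi_convexHull [Fintype ι] {f : (Π i, E i) → F}
    (hf : IsSeparatelyAffine 𝕜 f) (S : Π i, Set (E i)) :
    convexHull 𝕜 (f '' univ.pi (fun i => convexHull 𝕜 (S i))) = convexHull 𝕜 (f '' univ.pi S) :=
  (convexHull_min (image_subset_iff.2 fun _ hx => hf.mem_convexHull_image_pi (mem_univ_pi.1 hx))
    (convex_convexHull 𝕜 _)).antisymm
    (convexHull_mono (image_mono (pi_mono fun i _ => subset_convexHull 𝕜 (S i))))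

end SeparatelyAffine

theorem Set.Finite.convexHull_extremePoints_convexHull {E : Type*} [AddCommGroup E]
    [Module ℝ E] [TopologicalSpace E] [T2Space E] [IsTopologicalAddGroup E]
    [ContinuousSMul ℝ E] [LocallyConvexSpace ℝ E] {s : Set E} (hs : s.Finite) :
    convexHull ℝ ((convexHull ℝ s).extremePoints ℝ) = convexHull ℝ s := by
  have hfin : ((convexHull ℝ s).extremePoints ℝ).Finite := hs.subset extremePoints_convexHull_subset
  rw [← (hfin.isCompact_convexHull ℝ).isClosed.closure_eq]
  exact closure_convexHull_extremePoints (hs.isCompact_convexHull ℝ) (convex_convexHull ℝ s)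

theorem multilinear_over_product_of_polytopes_extreme_points_general
    (k : ℕ) (n : Fin k → ℕ)
    (V : (j : Fin k) → Finset (Fin (n j) → ℝ))
    (P : (j : Fin k) → Set (Fin (n j) → ℝ))
    (hP : ∀ j, P j = convexHull ℝ ((V j : Set (Fin (n j) → ℝ))))
    (M : ((j : Fin k) → (Fin (n j) → ℝ)) → ℝ) (hM : IsBlockMultilinear M) :
    convexHull ℝ
        ((fun x : (j : Fin k) → Fin (n j) → ℝ => (x, M x)) '' {x | ∀ j, x j ∈ P j}) =
      convexHull ℝ
        ((fun x : (j : Fin k) → Fin (n j) → ℝ => (x, M x)) ''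
          {x | ∀ j, x j ∈ Set.extremePoints ℝ (P j)}) := by
  have hP_eq : P = fun j => convexHull ℝ (extremePoints ℝ (P j)) := funext fun j => by
    rw [hP j, (V j).finite_toSet.convexHull_extremePoints_convexHull]
  have hpi (T : (j : Fin k) → Set (Fin (n j) → ℝ)) : {x | ∀ j, x j ∈ T j} = univ.pi T := by
    ext; simp
  rw [hpi, hpi]
  conv_lhs => rw [hP_eq]
  exact (isSeparatelyAffine_id.prodMk hM).convexHull_image_pi_convexHull _

/-- The convex hull of the graph of a multilinear function over a product of polytopes is
generated by the graph points over tuples of extreme points (Rikun). -/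
theorem multilinear_over_product_of_polytopes_extreme_points
    (k : ℕ) (hk : 0 < k) (n : Fin k → ℕ) (hn : ∀ j, 0 < n j)
    (V : (j : Fin k) → Finset (Fin (n j) → ℝ)) (hV : ∀ j, (V j).Nonempty)
    (P : (j : Fin k) → Set (Fin (n j) → ℝ))
    (hP : ∀ j, P j = convexHull ℝ ((V j : Set (Fin (n j) → ℝ))))
    (M : ((j : Fin k) → (Fin (n j) → ℝ)) → ℝ) (hM : IsBlockMultilinear M) :
    convexHull ℝ
        ((fun x : (j : Fin k) → Fin (n j) → ℝ => (x, M x)) '' {x | ∀ j, x j ∈ P j}) =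
      convexHull ℝ
        ((fun x : (j : Fin k) → Fin (n j) → ℝ => (x, M x)) ''
          {x | ∀ j, x j ∈ Set.extremePoints ℝ (P j)}) :=
  multilinear_over_product_of_polytopes_extreme_points_general k n V P hP M hM
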